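/- arXiv:2109.01763 — 3 statements merged into one kernel-verified Lean document; each statement's English description precedes it below -/
import Mathlib

section
/- Let G be a group, X ⊆ G a subset, m a natural number, and a, b : Fin m → G two lists of elements. Suppose l is a list of elements of X whose product x = l.prod satisfies x⁻¹ · aᵢ · x = bᵢ for all i, and l has minimal length among all lists of elements of X whose product conjugates the list a to the list b. Then the map sending j ∈ {0, 1, ..., l.length} to the tuple (x_j⁻¹ · a₁ · x_j, ..., x_j⁻¹ · a_m · x_j), where x_j is the product of the first j entries of l, is injective. -/
/-! If two prefixes `x_s`, `x_t` (`s < t`) of `l` conjugate the tuple `a` to the same tuple, then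
cutting the segment between them out of `l` leaves a shorter word over `X` whose product still
conjugates `a` to `b`, contradicting the minimality of `l`. -/

theorem conj_mul_right_eq_of_conj_eq {G : Type*} [Group G] {g x y : G}
    (h : x⁻¹ * g * x = y⁻¹ * g * y) (z : G) :
    (x * z)⁻¹ * g * (x * z) = (y * z)⁻¹ * g * (y * z) :=
  calc (x * z)⁻¹ * g * (x * z) = z⁻¹ * (x⁻¹ * g * x) * z := by group
    _ = z⁻¹ * (y⁻¹ * g * y) * z := by rw [h]
    _ = (y * z)⁻¹ * g * (y * z) := by group

namespace List

variable {α : Type*}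

theorem take_append_drop_sublist {s t : ℕ} (hst : s ≤ t) (l : List α) :
    l.take s ++ l.drop t <+ l := by
  simpa only [take_append_drop] using
    (take_sublist_take_left (l := l) hst).append (Sublist.refl (l.drop t))

theorem length_take_append_drop_lt {s t : ℕ} (hst : s < t) {l : List α} (ht : t ≤ l.length) :
    (l.take s ++ l.drop t).length < l.length := by
  simp only [length_append, length_take, length_drop]
  omega

theorem conj_prod_take_append_drop {G : Type*} [Group G] {l : List G} {s t : ℕ} {g : G}
    (h : (l.take s).prod⁻¹ * g * (l.take s).prod = (l.take t).prod⁻¹ * g * (l.take t).prod) :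
    (l.take s ++ l.drop t).prod⁻¹ * g * (l.take s ++ l.drop t).prod =
      l.prod⁻¹ * g * l.prod := by
  rw [prod_append, conj_mul_right_eq_of_conj_eq h, ← prod_append, take_append_drop]

end List

/-- The prefix-conjugate-tuple map of a minimal-length conjugating
word is injective. -/
theorem stmt_0 {G : Type*} [Group G] (X : Set G) (m : ℕ) (a b : Fin m → G)
    (l : List G) (hlX : ∀ g ∈ l, g ∈ X)
    (hconj : ∀ i : Fin m, l.prod⁻¹ * a i * l.prod = b i)
    (hmin : ∀ l' : List G, (∀ g ∈ l', g ∈ X) →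
      (∀ i : Fin m, l'.prod⁻¹ * a i * l'.prod = b i) → l.length ≤ l'.length) :
    Function.Injective
      (fun j : Fin (l.length + 1) =>
        fun i : Fin m => ((l.take j).prod)⁻¹ * a i * (l.take j).prod) := by
  refine Function.Injective.of_lt_imp_ne fun s t hst hsame => ?_
  have hst : (s : ℕ) < t := hst
  have hX : ∀ g ∈ l.take s ++ l.drop t, g ∈ X := fun g hg =>
    hlX g ((List.take_append_drop_sublist hst.le l).subset hg)
  have hconj' : ∀ i, (l.take s ++ l.drop t).prod⁻¹ * a i * (l.take s ++ l.drop t).prod = b i :=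
    fun i => (List.conj_prod_take_append_drop (congrFun hsame i)).trans (hconj i)
  have ht : (t : ℕ) ≤ l.length := Nat.lt_succ_iff.mp t.isLt
  exact (hmin _ hX hconj').not_gt (List.length_take_append_drop_lt hst ht)
end

section
/- Let G be a group, X ⊆ G, m a natural number, and a, b : Fin m → G two lists of elements. Let l = [g₁, ..., g_ℓ] be a list of elements of X with product x satisfying x⁻¹ · aᵢ · x = bᵢ for all i. Suppose 0 ≤ s < t ≤ ℓ are such that, writing x_j for the product of the first j entries of l, one has x_s⁻¹ · aᵢ · x_s = x_t⁻¹ · aᵢ · x_t for all i ∈ Fin m. Then the element y = x_s · x_t⁻¹ · x satisfies y⁻¹ · aᵢ · y = bᵢ for all i, and y is the product of the list obtained by concatenating the first s entries of l with the entries of l after position t; in particular y is a product of s + ℓ − t < ℓ elements of X. -/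
theorem conj_mul_inv_mul_eq_of_conj_eq {G : Type*} [Group G] {a u v : G} (x : G)
    (h : u⁻¹ * a * u = v⁻¹ * a * v) :
    (u * v⁻¹ * x)⁻¹ * a * (u * v⁻¹ * x) = x⁻¹ * a * x := by
  calc (u * v⁻¹ * x)⁻¹ * a * (u * v⁻¹ * x) = x⁻¹ * (v * (u⁻¹ * a * u) * v⁻¹) * x := by group
    _ = x⁻¹ * a * x := by rw [h]; group

theorem List.prod_take_mul_inv_prod_take_mul_prod {G : Type*} [Group G] (l : List G)
    (s t : ℕ) : (l.take s).prod * (l.take t).prod⁻¹ * l.prod = (l.take s ++ l.drop t).prod := by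
  conv_lhs => arg 2; rw [← l.take_append_drop t, List.prod_append]
  rw [List.prod_append]
  group

theorem List.length_take_append_drop {α : Type*} (l : List α) {s t : ℕ} (hs : s ≤ l.length)
    (ht : t ≤ l.length) : (l.take s ++ l.drop t).length = s + l.length - t := by
  simp only [List.length_append, List.length_take, List.length_drop]
  omega

theorem stmt_2_general {G : Type*} [Group G] (m : ℕ) (a b : Fin m → G)
    (l : List G)
    (hconj : ∀ i : Fin m, l.prod⁻¹ * a i * l.prod = b i)
    (s t : ℕ) (hst : s < t) (ht : t ≤ l.length)
    (heq : ∀ i : Fin m,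
      ((l.take s).prod)⁻¹ * a i * (l.take s).prod =
        ((l.take t).prod)⁻¹ * a i * (l.take t).prod) :
    (∀ i : Fin m,
        ((l.take s).prod * ((l.take t).prod)⁻¹ * l.prod)⁻¹ * a i *
          ((l.take s).prod * ((l.take t).prod)⁻¹ * l.prod) = b i) ∧
    (l.take s).prod * ((l.take t).prod)⁻¹ * l.prod = (l.take s ++ l.drop t).prod ∧
    (l.take s ++ l.drop t).length = s + l.length - t ∧
    s + l.length - t < l.length :=
  ⟨fun i => (conj_mul_inv_mul_eq_of_conj_eq l.prod (heq i)).trans (hconj i),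
    l.prod_take_mul_inv_prod_take_mul_prod s t,
    l.length_take_append_drop (hst.le.trans ht) ht,
    by omega⟩

/-- Equal prefix-conjugate tuples at positions `s < t` yield a
strictly shorter conjugating element `x_s * x_t⁻¹ * x`. -/
theorem stmt_2 {G : Type*} [Group G] (X : Set G) (m : ℕ) (a b : Fin m → G)
    (l : List G) (hlX : ∀ g ∈ l, g ∈ X)
    (hconj : ∀ i : Fin m, l.prod⁻¹ * a i * l.prod = b i)
    (s t : ℕ) (hst : s < t) (ht : t ≤ l.length)
    (heq : ∀ i : Fin m,
      ((l.take s).prod)⁻¹ * a i * (l.take s).prod =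
        ((l.take t).prod)⁻¹ * a i * (l.take t).prod) :
    (∀ i : Fin m,
        ((l.take s).prod * ((l.take t).prod)⁻¹ * l.prod)⁻¹ * a i *
          ((l.take s).prod * ((l.take t).prod)⁻¹ * l.prod) = b i) ∧
    (l.take s).prod * ((l.take t).prod)⁻¹ * l.prod = (l.take s ++ l.drop t).prod ∧
    (l.take s ++ l.drop t).length = s + l.length - t ∧
    s + l.length - t < l.length :=
  stmt_2_general m a b l hconj s t hst ht heq
end

section
/- Let G be a group, X a finite subset of G, m ≥ 1, and a, b : Fin m → G two lists with a injective. Suppose l is a list of elements of X whose product x = l.prod satisfies x⁻¹ · aᵢ · x = bᵢ for all i, and l has minimal length among all lists of elements of X whose product conjugates the list a to the list b. Suppose further that C is a natural number such that for every i ∈ Fin m and every j ∈ {0, ..., l.length}, the element x_j⁻¹ · aᵢ · x_j is the product of some list of at most C elements of X, where x_j is the product of the first j entries of l. Then l.length + 1 ≤ (∑_{k=0}^{C} |X|^k)^m. -/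
/-!
Conjugating `a` by successive prefixes `x_j` of a minimal word `l` gives `l.length + 1` tuples
`(x_j⁻¹ aᵢ x_j)ᵢ`. If two of them, for `j < j'`, coincided, cutting the subword between
positions `j` and `j'` out of `l` would leave a shorter word conjugating `a` to `b`. So these
tuples are pairwise distinct, and as each lies in the `m`-th power of the ball of radius `C` in
the word metric, which has at most `∑_{k ≤ C} |X|^k` elements, pigeonhole gives the bound.
-/

open Finset Pointwise

section WordBall

variable {G : Type*} [DecidableEq G] [Monoid G]

theorem list_prod_mem_pow_length {X : Finset G} : ∀ {w : List G}, (∀ g ∈ w, g ∈ X) →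
    w.prod ∈ X ^ w.length
  | [], _ => by simp
  | g :: w, h => by
    rw [List.prod_cons, List.length_cons, pow_succ']
    exact mul_mem_mul (h g List.mem_cons_self)
      (list_prod_mem_pow_length fun x hx => h x (List.mem_cons_of_mem g hx))

def wordBall (X : Finset G) (C : ℕ) : Finset G :=
  (range (C + 1)).biUnion (X ^ ·)

theorem list_prod_mem_wordBall {X : Finset G} {C : ℕ} {w : List G} (hwX : ∀ g ∈ w, g ∈ X)
    (hw : w.length ≤ C) : w.prod ∈ wordBall X C :=
  mem_biUnion.2 ⟨w.length, mem_range.2 (Nat.lt_succ_of_le hw), list_prod_mem_pow_length hwX⟩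

theorem card_wordBall_le (X : Finset G) (C : ℕ) :
    (wordBall X C).card ≤ ∑ k ∈ range (C + 1), X.card ^ k :=
  card_biUnion_le.trans (sum_le_sum fun _ _ => card_pow_le)

end WordBall

section Shortening

variable {G : Type*} [Group G]

theorem conj_prod_take_append_drop {l : List G} {g : G} {j j' : ℕ}
    (h : (l.take j).prod⁻¹ * g * (l.take j).prod = (l.take j').prod⁻¹ * g * (l.take j').prod) :
    (l.take j ++ l.drop j').prod⁻¹ * g * (l.take j ++ l.drop j').prod = l.prod⁻¹ * g * l.prod := by
  conv_rhs => rw [← List.take_append_drop j' l]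
  simp only [List.prod_append, mul_inv_rev, mul_assoc] at h ⊢
  simp only [← mul_assoc, h]

theorem length_take_append_drop_lt {α : Type*} {l : List α} {j j' : ℕ} (hjj' : j < j')
    (hj' : j' ≤ l.length) :
    (l.take j ++ l.drop j').length < l.length := by
  simp only [List.length_append, List.length_take, List.length_drop]
  omega

theorem injOn_conj_prod_take_of_minimal {ι : Type*} (X : Set G) (a b : ι → G) (l : List G)
    (hlX : ∀ g ∈ l, g ∈ X) (hconj : ∀ i, l.prod⁻¹ * a i * l.prod = b i)
    (hmin : ∀ l' : List G, (∀ g ∈ l', g ∈ X) →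
      (∀ i, l'.prod⁻¹ * a i * l'.prod = b i) → l.length ≤ l'.length) :
    Set.InjOn (fun j i => (l.take j).prod⁻¹ * a i * (l.take j).prod)
      (range (l.length + 1) : Set ℕ) := by
  suffices shorter : ∀ j j', j < j' → j' ≤ l.length →
      (∀ i, (l.take j).prod⁻¹ * a i * (l.take j).prod
        = (l.take j').prod⁻¹ * a i * (l.take j').prod) → False by
    intro j hj j' hj' heq
    simp only [coe_range, Set.mem_Iio] at hj hj'
    rcases lt_trichotomy j j' with hlt | rfl | hgt
    · exact (shorter j j' hlt (by omega) (congrFun heq)).elim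
    · rfl
    · exact (shorter j' j hgt (by omega) fun i => (congrFun heq i).symm).elim
  intro j j' hjj' hj' heq
  have hcutX : ∀ g ∈ l.take j ++ l.drop j', g ∈ X := fun g hg =>
    (List.mem_append.1 hg).elim (fun h => hlX g (List.take_subset j l h))
      (fun h => hlX g (List.drop_subset j' l h))
  have hcut := hmin _ hcutX fun i => (conj_prod_take_append_drop (heq i)).trans (hconj i)
  exact (length_take_append_drop_lt hjj' hj').not_ge hcut

end Shortening

theorem stmt_5_general {G : Type*} [Group G] (X : Finset G) (m : ℕ)
    (a b : Fin m → G)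
    (l : List G) (hlX : ∀ g ∈ l, g ∈ X)
    (hconj : ∀ i : Fin m, l.prod⁻¹ * a i * l.prod = b i)
    (hmin : ∀ l' : List G, (∀ g ∈ l', g ∈ X) →
      (∀ i : Fin m, l'.prod⁻¹ * a i * l'.prod = b i) → l.length ≤ l'.length)
    (C : ℕ)
    (hC : ∀ (i : Fin m) (j : ℕ), j ≤ l.length →
      ∃ w : List G, (∀ y ∈ w, y ∈ X) ∧ w.length ≤ C ∧
        w.prod = ((l.take j).prod)⁻¹ * a i * (l.take j).prod) :
    l.length + 1 ≤ (∑ k ∈ Finset.range (C + 1), X.card ^ k) ^ m := by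
  classical
  have hmaps : Set.MapsTo (fun j i => (l.take j).prod⁻¹ * a i * (l.take j).prod)
      (range (l.length + 1) : Set ℕ) ↑(Fintype.piFinset fun _ : Fin m => wordBall X C) := by
    intro j hj
    rw [mem_coe, Fintype.mem_piFinset]
    intro i
    obtain ⟨w, hwX, hwC, hw⟩ := hC i j (Nat.lt_succ_iff.1 (mem_range.1 hj))
    simpa only [hw] using list_prod_mem_wordBall hwX hwC
  calc l.length + 1 = (range (l.length + 1)).card := (card_range _).symm
    _ ≤ (Fintype.piFinset fun _ : Fin m => wordBall X C).card :=
      card_le_card_of_injOn _ hmaps (injOn_conj_prod_take_of_minimal X a b l hlX hconj hmin)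
    _ = (wordBall X C).card ^ m := Fintype.card_piFinset_const _ _
    _ ≤ _ := Nat.pow_le_pow_left (card_wordBall_le X C) m

/-- Abstract form of the paper's Theorem 2: the length of a
minimal conjugating word is bounded by `(∑_{k=0}^{C} |X|^k)^m`. -/
theorem stmt_5 {G : Type*} [Group G] (X : Finset G) (m : ℕ) (hm : 1 ≤ m)
    (a b : Fin m → G) (ha : Function.Injective a)
    (l : List G) (hlX : ∀ g ∈ l, g ∈ X)
    (hconj : ∀ i : Fin m, l.prod⁻¹ * a i * l.prod = b i)
    (hmin : ∀ l' : List G, (∀ g ∈ l', g ∈ X) →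
      (∀ i : Fin m, l'.prod⁻¹ * a i * l'.prod = b i) → l.length ≤ l'.length)
    (C : ℕ)
    (hC : ∀ (i : Fin m) (j : ℕ), j ≤ l.length →
      ∃ w : List G, (∀ y ∈ w, y ∈ X) ∧ w.length ≤ C ∧
        w.prod = ((l.take j).prod)⁻¹ * a i * (l.take j).prod) :
    l.length + 1 ≤ (∑ k ∈ Finset.range (C + 1), X.card ^ k) ^ m :=
  stmt_5_general X m a b l hlX hconj hmin C hC
end
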